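/- Each MM iteration does not decrease the mean log score: with the update of the previous statement, (1/n) Σ_k ln(Σ_m (w_m)_{i+1} f_m(y_k)) ≥ (1/n) Σ_k ln(Σ_m (w_m)_i f_m(y_k)). -/
import Mathlib

open Finset Real

/-- Jensen's inequality for `Real.log`. -/
lemma log_jensen {ι : Type*} [Fintype ι] (p x : ι → ℝ) (hp : ∀ i, 0 ≤ p i)
    (hps : ∑ i, p i = 1) (hx : ∀ i, 0 < x i) :
    ∑ i, p i * Real.log (x i) ≤ Real.log (∑ i, p i * x i) := by
  have := (strictConcaveOn_log_Ioi.concaveOn).le_map_sum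
    (t := Finset.univ) (w := p) (p := x) (fun i _ => hp i) hps (fun i _ => hx i)
  simpa [smul_eq_mul] using this

/-- Each Minorization–Maximization iteration does not decrease the mean log score. -/
theorem mm_update_ascent (M n : ℕ) (hn : 0 < n)
    (d : Fin M → Fin n → ℝ) (hd : ∀ m k, 0 < d m k)
    (w : Fin M → ℝ) (hw : ∀ m, 0 < w m) (hws : ∑ m, w m = 1) :
    ((1:ℝ)/n) * ∑ k, Real.log (∑ m, w m * d m k)
      ≤ ((1:ℝ)/n) * ∑ k, Real.log
          (∑ m, (w m * (((1:ℝ)/n) * ∑ j, d m j / (∑ l, w l * d l j))) * d m k) := by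
  have hM : 0 < M := by
    rcases Nat.eq_zero_or_pos M with h | h
    · subst h; simp at hws
    · exact h
  set S : Fin n → ℝ := fun k => ∑ l, w l * d l k with hS
  have hSpos : ∀ k, 0 < S k := fun k =>
    Finset.sum_pos (fun l _ => mul_pos (hw l) (hd l k)) ⟨⟨0, hM⟩, mem_univ _⟩
  set c : Fin M → ℝ := fun m => ((1:ℝ)/n) * ∑ j, d m j / S j with hc
  have hnpos : (0:ℝ) < n := Nat.cast_pos.mpr hn
  have hcpos : ∀ m, 0 < c m := fun m =>
    mul_pos (by positivity) (Finset.sum_pos (fun j _ => div_pos (hd m j) (hSpos j))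
      ⟨⟨0, hn⟩, mem_univ _⟩)
  set w' : Fin M → ℝ := fun m => w m * c m with hw'
  have hw'pos : ∀ m, 0 < w' m := fun m => mul_pos (hw m) (hcpos m)
  have hw's : ∑ m, w' m = 1 := by
    have h1 : ∑ m, w' m = ∑ m, ∑ j, ((1:ℝ)/n) * (w m * d m j / S j) := by
      apply Finset.sum_congr rfl; intro m _
      simp only [hw', hc]
      rw [Finset.mul_sum, Finset.mul_sum]
      apply Finset.sum_congr rfl; intro j _; ring
    rw [h1, Finset.sum_comm]
    have h2 : ∀ j, ∑ m, ((1:ℝ)/n) * (w m * d m j / S j) = (1:ℝ)/n := by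
      intro j
      rw [← Finset.mul_sum, ← Finset.sum_div]
      rw [div_self (hSpos j).ne', mul_one]
    simp only [h2, Finset.sum_const, card_univ, Fintype.card_fin, nsmul_eq_mul]
    field_simp
  set p : Fin M → Fin n → ℝ := fun m k => w m * d m k / S k with hp
  have hpsum : ∀ k, ∑ m, p m k = 1 := fun k => by
    simp only [hp]; rw [← Finset.sum_div]; exact div_self (hSpos k).ne'
  have key : ∀ k, ∑ m, p m k * Real.log (c m) + Real.log (S k)
      ≤ Real.log (∑ m, w' m * d m k) := by
    intro k
    have hj := log_jensen (fun m => p m k) c (fun m => le_of_lt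
      (div_pos (mul_pos (hw m) (hd m k)) (hSpos k))) (hpsum k) hcpos
    have heq : ∑ m, p m k * c m = (∑ m, w' m * d m k) / S k := by
      rw [Finset.sum_div]; apply Finset.sum_congr rfl; intro m _
      simp only [hp, hw']; ring
    have hpos : 0 < ∑ m, w' m * d m k :=
      Finset.sum_pos (fun m _ => mul_pos (hw'pos m) (hd m k)) ⟨⟨0, hM⟩, mem_univ _⟩
    rw [heq, Real.log_div hpos.ne' (hSpos k).ne'] at hj
    linarith
  have hsum : ∑ k, ∑ m, p m k * Real.log (c m) = n * ∑ m, w' m * Real.log (c m) := by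
    rw [Finset.sum_comm, Finset.mul_sum]
    apply Finset.sum_congr rfl; intro m _
    have hR : (n:ℝ) * w' m = w m * ∑ j, d m j / S j := by
      simp only [hw', hc]; field_simp
    have hL : ∑ k, p m k = w m * ∑ j, d m j / S j := by
      simp only [hp]; rw [Finset.mul_sum]
      exact Finset.sum_congr rfl fun j _ => (mul_div_assoc _ _ _)
    rw [← Finset.sum_mul, hL, ← hR]; ring
  have gibbs : 0 ≤ ∑ m, w' m * Real.log (c m) := by
    have hj := log_jensen w' (fun m => (c m)⁻¹) (fun m => (hw'pos m).le) hw's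
      (fun m => inv_pos.mpr (hcpos m))
    have heq : ∑ m, w' m * (c m)⁻¹ = 1 := by
      rw [← hws]; apply Finset.sum_congr rfl; intro m _
      simp only [hw']
      rw [mul_assoc, mul_inv_cancel₀ (hcpos m).ne', mul_one]
    rw [heq, Real.log_one] at hj
    have hneg : ∑ m, w' m * Real.log (c m)⁻¹ = -∑ m, w' m * Real.log (c m) := by
      rw [← Finset.sum_neg_distrib]; apply Finset.sum_congr rfl; intro m _
      rw [Real.log_inv]; ring
    rw [hneg] at hj
    linarith
  have total : ∑ k, Real.log (S k) ≤ ∑ k, Real.log (∑ m, w' m * d m k) := by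
    have h1 : ∑ k, (∑ m, p m k * Real.log (c m) + Real.log (S k))
        ≤ ∑ k, Real.log (∑ m, w' m * d m k) := Finset.sum_le_sum fun k _ => key k
    rw [Finset.sum_add_distrib, hsum] at h1
    nlinarith [mul_nonneg hnpos.le gibbs]
  exact mul_le_mul_of_nonneg_left total (by positivity)
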